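/- Resilient version via element exchange: let f be normalized, monotone, submodular with curvature ν, and let A^sol, A* ⊆ Ω both have cardinality k ≥ α with the property that f({a}) ≥ f({b}) for all a ∈ A^sol and all b ∈ A* \ A^sol. Then there exists a subset R* ⊆ A* with |A* \ R*| = α such that min_{B ⊆ A^sol, |B| ≤ α} f(A^sol \ B) ≥ (1-ν) f(R*). -/

import Mathlib

/-!
Write `c = 1 - ν`. Curvature gives `c * f {x} ≤ f Ω - f (Ω \ {x})`, and by submodularity these
marginals sum over `S` to at most `f S`; together with subadditivity `f R ≤ ∑ x ∈ R, f {x}` it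
therefore suffices to compare sums of singleton values. Take for `R*` a `(k - α)`-subset of `A*`
of least singleton sum. Every `A^sol \ B` with `|B| ≤ α` contains a `(k - α)`-subset `T`, and
exchanging the elements of `T` outside `A*` for as many elements of `A* \ A^sol`, none of which has
a larger singleton value, yields a `(k - α)`-subset of `A*` whose sum is at most that of `T`.
-/

open Finset

noncomputable def resVal {Ω : Type*} [DecidableEq Ω] (α : ℕ)
    (f : Finset Ω → ℝ) (A : Finset Ω) : ℝ :=
  (A.powerset.filter (fun B => B.card ≤ α)).inf' ⟨∅, by simp⟩ (fun B => f (A \ B))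

noncomputable def curvature {Ω : Type*} [Fintype Ω] [DecidableEq Ω] [Nonempty Ω]
    (f : Finset Ω → ℝ) : ℝ :=
  1 - (univ : Finset Ω).inf' univ_nonempty (fun x => (f univ - f (univ \ {x})) / f {x})

section SetFunction

variable {Ω : Type*} [DecidableEq Ω] {f : Finset Ω → ℝ}

theorem le_sum_singleton (hnorm : f ∅ = 0)
    (hsub : ∀ A B : Finset Ω, f A + f B ≥ f (A ∪ B) + f (A ∩ B)) (S : Finset Ω) :
    f S ≤ ∑ x ∈ S, f {x} := by
  induction S using Finset.induction_on with
  | empty => simp [hnorm]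
  | @insert a s ha ih =>
    have h := hsub {a} s
    rw [← insert_eq, singleton_inter_of_notMem ha, hnorm] at h
    rw [sum_insert ha]
    linarith

variable [Fintype Ω]

theorem sum_marginal_le (hnorm : f ∅ = 0)
    (hsub : ∀ A B : Finset Ω, f A + f B ≥ f (A ∪ B) + f (A ∩ B)) (S : Finset Ω) :
    ∑ x ∈ S, (f univ - f (univ \ {x})) ≤ f S := by
  induction S using Finset.induction_on with
  | empty => simp [hnorm]
  | @insert a s ha ih =>
    have h := hsub (insert a s) (univ \ {a})
    have hunion : insert a s ∪ (univ \ {a}) = univ := by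
      ext x; by_cases hx : x = a <;> simp [hx]
    have hinter : insert a s ∩ (univ \ {a}) = s := by
      ext x; by_cases hx : x = a <;> simp [hx, ha]
    rw [hunion, hinter] at h
    rw [sum_insert ha]
    linarith

theorem mul_sum_singleton_le (hnorm : f ∅ = 0)
    (hsub : ∀ A B : Finset Ω, f A + f B ≥ f (A ∪ B) + f (A ∩ B)) {c : ℝ}
    (hc : ∀ x, c * f {x} ≤ f univ - f (univ \ {x})) (S : Finset Ω) :
    c * ∑ x ∈ S, f {x} ≤ f S :=
  calc c * ∑ x ∈ S, f {x} = ∑ x ∈ S, c * f {x} := mul_sum _ _ _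
    _ ≤ ∑ x ∈ S, (f univ - f (univ \ {x})) := sum_le_sum fun x _ => hc x
    _ ≤ f S := sum_marginal_le hnorm hsub S

variable [Nonempty Ω]

theorem one_sub_curvature_nonneg (hmono : ∀ A B : Finset Ω, A ⊆ B → f A ≤ f B)
    (hnonneg : ∀ x, 0 ≤ f {x}) : 0 ≤ 1 - curvature f := by
  rw [curvature, sub_sub_cancel]
  exact le_inf' _ _ fun x _ =>
    div_nonneg (sub_nonneg.2 (hmono _ _ sdiff_subset)) (hnonneg x)

theorem one_sub_curvature_mul_le {x : Ω} (hx : 0 < f {x}) :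
    (1 - curvature f) * f {x} ≤ f univ - f (univ \ {x}) := by
  rw [curvature, sub_sub_cancel, ← le_div_iff₀ hx]
  exact inf'_le _ (mem_univ x)

end SetFunction

section Exchange

variable {ι M : Type*} [AddCommMonoid M] [LinearOrder M] [IsOrderedAddMonoid M]
  (g : ι → M)

theorem sum_le_sum_of_card_eq_of_forall_le {s t : Finset ι} (hcard : #s = #t)
    (hle : ∀ b ∈ s, ∀ a ∈ t, g b ≤ g a) : ∑ x ∈ s, g x ≤ ∑ x ∈ t, g x := by
  rcases t.eq_empty_or_nonempty with rfl | ht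
  · rw [card_eq_zero.1 hcard]
  calc ∑ x ∈ s, g x ≤ #s • t.inf' ht g :=
        sum_le_card_nsmul _ _ _ fun b hb => le_inf' ht g fun a ha => hle b hb a ha
    _ = #t • t.inf' ht g := by rw [hcard]
    _ ≤ ∑ x ∈ t, g x := card_nsmul_le_sum _ _ _ fun a ha => inf'_le g ha

variable [DecidableEq ι]

/-- The elements of `T` outside `t` are traded for elements of `t \ s`; there are enough of
these because `#(s \ t) = #(t \ s)`. -/
theorem exists_subset_card_eq_sum_le {s t T : Finset ι} (hcard : #s = #t) (hT : T ⊆ s)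
    (hle : ∀ a ∈ s, ∀ b ∈ t \ s, g a ≥ g b) :
    ∃ R ⊆ t, #R = #T ∧ ∑ x ∈ R, g x ≤ ∑ x ∈ T, g x := by
  have hroom : #(T \ t) ≤ #(t \ s) :=
    (card_le_card (sdiff_subset_sdiff hT le_rfl)).trans (card_sdiff_comm hcard).le
  obtain ⟨E, hE, hEcard⟩ := exists_subset_card_eq hroom
  have hdisj : Disjoint (T ∩ t) E := disjoint_left.2 fun x hx hxE =>
    (mem_sdiff.1 (hE hxE)).2 (hT (mem_inter.1 hx).1)
  refine ⟨T ∩ t ∪ E, union_subset inter_subset_right (hE.trans sdiff_subset), ?_, ?_⟩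
  · rw [card_union_of_disjoint hdisj, hEcard, card_inter_add_card_sdiff]
  · have hEsum : ∑ x ∈ E, g x ≤ ∑ x ∈ T \ t, g x :=
      sum_le_sum_of_card_eq_of_forall_le g hEcard fun b hb a ha =>
        hle a (hT (mem_sdiff.1 ha).1) b (hE hb)
    rw [sum_union hdisj, ← sum_inter_add_sum_sdiff T t]
    exact add_le_add le_rfl hEsum

end Exchange

theorem stmt10 {Ω : Type*} [Fintype Ω] [DecidableEq Ω] [Nonempty Ω]
    (f : Finset Ω → ℝ)
    (hnorm : f ∅ = 0)
    (hmono : ∀ A B : Finset Ω, A ⊆ B → f A ≤ f B)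
    (hsub : ∀ A B : Finset Ω, f A + f B ≥ f (A ∪ B) + f (A ∩ B))
    (hpos : ∀ x : Ω, 0 < f {x})
    (ν : ℝ)
    (hν : ν = 1 - (univ : Finset Ω).inf' univ_nonempty
      (fun x => (f univ - f (univ \ {x})) / f {x}))
    (α k : ℕ) (hαk : α ≤ k)
    (Asol Astar : Finset Ω) (hAsol : Asol.card = k) (hAstar : Astar.card = k)
    (hgreedy : ∀ a ∈ Asol, ∀ b ∈ Astar \ Asol, f {a} ≥ f {b}) :
    ∃ Rstar ⊆ Astar, (Astar \ Rstar).card = α ∧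
      resVal α f Asol ≥ (1 - ν) * f Rstar := by
  change ν = curvature f at hν
  subst hν
  obtain ⟨R, hR, hRmin⟩ := (Astar.powersetCard (k - α)).exists_min_image
    (fun R => ∑ x ∈ R, f {x}) (powersetCard_nonempty.2 (by omega))
  rw [mem_powersetCard] at hR
  refine ⟨R, hR.1, by rw [card_sdiff_of_subset hR.1, hR.2, hAstar]; omega, le_inf' _ _ ?_⟩
  intro B hB
  rw [mem_filter, mem_powerset] at hB
  obtain ⟨T, hTB, hTcard⟩ : ∃ T ⊆ Asol \ B, #T = k - α := exists_subset_card_eq <| by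
    rw [card_sdiff_of_subset hB.1]; omega
  obtain ⟨R', hR', hR'card, hR'sum⟩ := exists_subset_card_eq_sum_le (fun x => f {x})
    (hAsol.trans hAstar.symm) (hTB.trans sdiff_subset) hgreedy
  have hsum : ∑ x ∈ R, f {x} ≤ ∑ x ∈ Asol \ B, f {x} :=
    calc ∑ x ∈ R, f {x} ≤ ∑ x ∈ R', f {x} :=
          hRmin R' (mem_powersetCard.2 ⟨hR', hR'card.trans hTcard⟩)
      _ ≤ ∑ x ∈ T, f {x} := hR'sum
      _ ≤ ∑ x ∈ Asol \ B, f {x} := sum_le_sum_of_subset_of_nonneg hTB fun x _ _ => (hpos x).le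
  have hc := one_sub_curvature_nonneg hmono fun x => (hpos x).le
  calc (1 - curvature f) * f R ≤ (1 - curvature f) * ∑ x ∈ R, f {x} :=
        mul_le_mul_of_nonneg_left (le_sum_singleton hnorm hsub R) hc
    _ ≤ (1 - curvature f) * ∑ x ∈ Asol \ B, f {x} := mul_le_mul_of_nonneg_left hsum hc
    _ ≤ f (Asol \ B) :=
        mul_sum_singleton_le hnorm hsub (fun x => one_sub_curvature_mul_le (hpos x)) _
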